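/- Let f be a division rule satisfying Assumption 1, and suppose the interval bankruptcy rule F(f;·,·) based on f is interval game theoretic, i.e. there exists a map G from interval cooperative games on N to n-tuples of closed intervals such that F(f;E,[d]) = G(w_{E,[d]}) for every interval bankruptcy situation (E,[d]) with exact estate. Then F(f;·,·) coincides with its truncated form: F(f;E,[d] ∧ E) = F(f;E,[d]) for every interval bankruptcy situation (E,[d]) with exact estate. -/
import Mathlib


open Finset

/-- `(E, d)` is a (classical) bankruptcy problem: nonnegative estate, nonnegative
claims, and the estate does not exceed the total claim. -/
def IsBP {n : ℕ} (E : ℝ) (d : Fin n → ℝ) : Prop :=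
  0 ≤ E ∧ (∀ i, 0 ≤ d i) ∧ E ≤ ∑ i, d i

/-- `f` is a division rule: reasonable and efficient on every bankruptcy problem. -/
def IsDivisionRule {n : ℕ} (f : ℝ → (Fin n → ℝ) → Fin n → ℝ) : Prop :=
  ∀ E d, IsBP E d → (∀ i, 0 ≤ f E d i ∧ f E d i ≤ d i) ∧ (∑ i, f E d i) = E

/-- Assumption 1: over the domain of bankruptcy problems, each component `f i` is
nondecreasing in the estate `E`, nondecreasing in the own claim `d i`, and
nonincreasing in every other claim `d j`, `j ≠ i`. -/
def Assumption1 {n : ℕ} (f : ℝ → (Fin n → ℝ) → Fin n → ℝ) : Prop :=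
  (∀ E E' (d : Fin n → ℝ), IsBP E d → IsBP E' d → E ≤ E' → ∀ i, f E d i ≤ f E' d i) ∧
  (∀ E (d d' : Fin n → ℝ) (i : Fin n), IsBP E d → IsBP E d' → d i ≤ d' i →
      (∀ j, j ≠ i → d j = d' j) → f E d i ≤ f E d' i) ∧
  (∀ E (d d' : Fin n → ℝ) (i j : Fin n), j ≠ i → IsBP E d → IsBP E d' → d' j ≤ d j →
      (∀ k, k ≠ j → d k = d' k) → f E d i ≤ f E d' i)

/-- The bankruptcy game `v_{E,d}(S) = max(0, E − Σ_{i ∈ N∖S} d i)`. -/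
def bankruptcyGame {n : ℕ} (E : ℝ) (d : Fin n → ℝ) (S : Finset (Fin n)) : ℝ :=
  max 0 (E - ∑ i ∈ Sᶜ, d i)

/-- The truncated claims vector `d ∧ E`, with components `min (d i) E`. -/
def truncate {n : ℕ} (E : ℝ) (d : Fin n → ℝ) : Fin n → ℝ :=
  fun i => min (d i) E

/-- Interval bankruptcy situation with exact estate: estate `E` and interval
claims `[dl i, du i]`. -/
def IsIntervalBP {n : ℕ} (E : ℝ) (dl du : Fin n → ℝ) : Prop :=
  0 ≤ E ∧ (∀ i, 0 ≤ dl i ∧ dl i ≤ du i) ∧ E ≤ ∑ i, dl i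

/-- `d` is a selection of the interval claims `[dl, du]`. -/
def IsSelection {n : ℕ} (dl du d : Fin n → ℝ) : Prop :=
  ∀ i, dl i ≤ d i ∧ d i ≤ du i

/-- Lower endpoint of the interval bankruptcy rule based on `f`:
`f i (E, dl i, du₋ᵢ)`. -/
def ruleLow {n : ℕ} (f : ℝ → (Fin n → ℝ) → Fin n → ℝ) (E : ℝ) (dl du : Fin n → ℝ)
    (i : Fin n) : ℝ :=
  f E (Function.update du i (dl i)) i

/-- Upper endpoint of the interval bankruptcy rule based on `f`:
`f i (E, du i, dl₋ᵢ)`. -/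
def ruleHigh {n : ℕ} (f : ℝ → (Fin n → ℝ) → Fin n → ℝ) (E : ℝ) (dl du : Fin n → ℝ)
    (i : Fin n) : ℝ :=
  f E (Function.update dl i (du i)) i

/-- The interval bankruptcy rule (with exact estate) based on `f`, as an `n`-tuple of
intervals encoded as pairs (lower endpoint, upper endpoint). -/
def intervalRule {n : ℕ} (f : ℝ → (Fin n → ℝ) → Fin n → ℝ) (E : ℝ)
    (dl du : Fin n → ℝ) : Fin n → ℝ × ℝ :=
  fun i => (ruleLow f E dl du i, ruleHigh f E dl du i)

/-- The interval bankruptcy game (with exact estate), each coalition value being the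
interval `[v_{E,du}(S), v_{E,dl}(S)]` encoded as a pair. -/
def intervalGame {n : ℕ} (E : ℝ) (dl du : Fin n → ℝ) :
    Finset (Fin n) → ℝ × ℝ :=
  fun S => (bankruptcyGame E du S, bankruptcyGame E dl S)

/-- Interval bankruptcy situation with interval estate `[El, Eu]` and interval
claims `[dl i, du i]`. -/
def IsIntervalBPE {n : ℕ} (El Eu : ℝ) (dl du : Fin n → ℝ) : Prop :=
  0 ≤ El ∧ El ≤ Eu ∧ (∀ i, 0 ≤ dl i ∧ dl i ≤ du i) ∧ Eu ≤ ∑ i, dl i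

/-- The interval bankruptcy rule based on `f` for an interval estate. -/
def intervalRuleE {n : ℕ} (f : ℝ → (Fin n → ℝ) → Fin n → ℝ) (El Eu : ℝ)
    (dl du : Fin n → ℝ) : Fin n → ℝ × ℝ :=
  fun i => (ruleLow f El dl du i, ruleHigh f Eu dl du i)

/-- The interval bankruptcy game for an interval estate. -/
def intervalGameE {n : ℕ} (El Eu : ℝ) (dl du : Fin n → ℝ) :
    Finset (Fin n) → ℝ × ℝ :=
  fun S => (bankruptcyGame El du S, bankruptcyGame Eu dl S)


lemma bg_trunc {n : ℕ} (E : ℝ) (d : Fin n → ℝ) (hE : 0 ≤ E) (hd : ∀ i, 0 ≤ d i)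
    (S : Finset (Fin n)) : bankruptcyGame E (truncate E d) S = bankruptcyGame E d S := by
  unfold bankruptcyGame truncate
  by_cases h : ∃ i ∈ Sᶜ, E ≤ d i
  · obtain ⟨i, hi, hEd⟩ := h
    have h1 : E ≤ ∑ j ∈ Sᶜ, min (d j) E := by
      calc E = min (d i) E := (min_eq_right hEd).symm
        _ ≤ _ := Finset.single_le_sum (fun j _ => le_min (hd j) hE) hi
    have h2 : E ≤ ∑ j ∈ Sᶜ, d j :=
      h1.trans (Finset.sum_le_sum fun j _ => min_le_left _ _)
    rw [max_eq_left (by linarith), max_eq_left (by linarith)]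
  · push_neg at h
    rw [Finset.sum_congr rfl fun j hj => min_eq_left (h j hj).le]

lemma ibp_trunc {n : ℕ} (E : ℝ) (dl du : Fin n → ℝ) (h : IsIntervalBP E dl du) :
    IsIntervalBP E (truncate E dl) (truncate E du) := by
  obtain ⟨hE, hdl, hsum⟩ := h
  refine ⟨hE, fun i => ⟨le_min (hdl i).1 hE, min_le_min (hdl i).2 le_rfl⟩, ?_⟩
  by_cases h : ∃ i, E ≤ dl i
  · obtain ⟨i, hi⟩ := h
    calc E = min (dl i) E := (min_eq_right hi).symm
      _ ≤ _ := Finset.single_le_sum (fun j _ => le_min (hdl j).1 hE) (Finset.mem_univ i)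
  · push_neg at h
    calc E ≤ ∑ i, dl i := hsum
      _ = _ := by
        apply Finset.sum_congr rfl
        intro j _
        exact (min_eq_left (h j).le).symm

/-- if the interval bankruptcy rule based on `f` (with exact estate)
is interval game theoretic, then it coincides with its truncated form. -/
theorem stmt_10 (n : ℕ) (hn : 1 ≤ n)
    (f : ℝ → (Fin n → ℝ) → Fin n → ℝ) (hf : IsDivisionRule f)
    (hA : Assumption1 f)
    (hgt : ∃ G : (Finset (Fin n) → ℝ × ℝ) → Fin n → ℝ × ℝ,
      ∀ E dl du, IsIntervalBP E dl du →
        intervalRule f E dl du = G (intervalGame E dl du)) :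
    ∀ E dl du, IsIntervalBP E dl du →
      intervalRule f E (truncate E dl) (truncate E du) = intervalRule f E dl du := by
  obtain ⟨G, hG⟩ := hgt
  intro E dl du h
  have h' := ibp_trunc E dl du h
  have hgame : intervalGame E (truncate E dl) (truncate E du) = intervalGame E dl du := by
    funext S
    unfold intervalGame
    rw [bg_trunc E du h.1 (fun i => ((h.2.1 i).1.trans (h.2.1 i).2)),
        bg_trunc E dl h.1 (fun i => (h.2.1 i).1)]
  rw [hG E _ _ h', hG E dl du h, hgame]
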